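/- Let T > 0, r > q ≥ 0, σ > 0, h ∈ ℝ, θ ∈ (0,1), and let G ∈ (0,1) be the unique solution of ln G = qT/G − rT. With α = α^g(t,u,x) = (t/u)·ln x − ((u² − t²)/(2u))·(r − q + σ²/2) and β = β^g(t,u) = (σ/(u·√3))·√(u³ − t³), define E(t, x, u, y) = e^{−q(u−t)}·(1/u)·[ ((−q·u + y·r·u + y·ln y + y·β²)/β)·φ((ln y − α)/β) − e^{α + β²/2}·(r·u + α + β² + 1)·Φ((ln y − α)/β − β) ]·(t/(u·x)). Then lim_{τ→0⁺} E(T−τ, G·(1 + hσ·√τ), T−τ(1−θ), G·(1 + hσ·√τ·√(1−θ))) = (q/G + 1/T)·( −Φ(−h·(1−√(1−θ))/√θ) + h·(√(1−θ)/√θ)·φ(−h·(1−√(1−θ))/√θ) ). -/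

import Mathlib

open MeasureTheory Real Filter Topology

/-- The standard normal cumulative distribution function. -/
noncomputable def stdNormalCDF (x : ℝ) : ℝ :=
  ∫ s in Set.Iic x, (Real.sqrt (2 * Real.pi))⁻¹ * Real.exp (-s ^ 2 / 2)

/-- The standard normal density `φ(x) = (2π)^{−1/2} e^{−x²/2}`. -/
noncomputable def stdNormalPDF (x : ℝ) : ℝ :=
  (Real.sqrt (2 * Real.pi))⁻¹ * Real.exp (-x ^ 2 / 2)

/-- `α^g(t,u,x) = (t/u)·ln x − ((u²−t²)/(2u))·(r−q+σ²/2)`. -/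
noncomputable def alphaG (r q σ t u x : ℝ) : ℝ :=
  (t / u) * Real.log x - ((u ^ 2 - t ^ 2) / (2 * u)) * (r - q + σ ^ 2 / 2)

/-- `β^g(t,u) = (σ/(u√3))·√(u³−t³)`. -/
noncomputable def betaG (σ t u : ℝ) : ℝ :=
  (σ / (u * Real.sqrt 3)) * Real.sqrt (u ^ 3 - t ^ 3)

/-- The integrand of the `x`-derivative of the American early exercise bonus premium
for the geometrically averaged Asian call:
`E(t,x,u,y) = e^{−q(u−t)}·(1/u)·[ ((−qu + yru + y ln y + yβ²)/β)·φ((ln y − α)/β)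
  − e^{α+β²/2}·(ru + α + β² + 1)·Φ((ln y − α)/β − β) ]·(t/(u·x))`,
where `α = α^g(t,u,x)` and `β = β^g(t,u)`. -/
noncomputable def eHatG (r q σ t x u y : ℝ) : ℝ :=
  Real.exp (-q * (u - t)) * (1 / u) *
    (((-q * u + y * r * u + y * Real.log y + y * (betaG σ t u) ^ 2) / betaG σ t u)
        * stdNormalPDF ((Real.log y - alphaG r q σ t u x) / betaG σ t u)
      - Real.exp (alphaG r q σ t u x + (betaG σ t u) ^ 2 / 2)
          * (r * u + alphaG r q σ t u x + (betaG σ t u) ^ 2 + 1)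
          * stdNormalCDF ((Real.log y - alphaG r q σ t u x) / betaG σ t u - betaG σ t u))
    * (t / (u * x))

/-! Substituting `s = √τ`, the four arguments of `E` are smooth in `s`, with the two times
meeting at `T` to second order, so `β^g = s·b(s)` for a continuous `b` with `b(0) = σ√θ`.
Both `ln y − α^g` and the numerator `−qu + yru + y ln y` vanish at `s = 0` (the latter by the
equation defining `G`), so after division by `β^g` they converge to their first derivatives
at `0` divided by `σ√θ`; every other factor of `E` is continuous. -/

lemma integrable_stdNormalPDF : Integrable stdNormalPDF := by
  refine ((integrable_exp_neg_mul_sq (by norm_num : (0:ℝ) < 1 / 2)).const_mul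
    (√(2 * π))⁻¹).congr (.of_forall fun s => ?_)
  simp only [stdNormalPDF]
  ring_nf

lemma stdNormalCDF_eq_integral_add (x : ℝ) :
    stdNormalCDF x = (∫ s in (0:ℝ)..x, stdNormalPDF s) + stdNormalCDF 0 := by
  have := intervalIntegral.integral_Iic_sub_Iic integrable_stdNormalPDF.integrableOn
    integrable_stdNormalPDF.integrableOn (a := 0) (b := x)
  simp only [stdNormalCDF, stdNormalPDF] at this ⊢
  linarith

lemma continuous_stdNormalCDF : Continuous stdNormalCDF := by
  rw [funext stdNormalCDF_eq_integral_add]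
  exact (integrable_stdNormalPDF.continuous_primitive 0).add continuous_const

lemma continuous_stdNormalPDF : Continuous stdNormalPDF := by
  unfold stdNormalPDF
  fun_prop

lemma tendsto_sqrt_nhdsGT_zero : Tendsto Real.sqrt (𝓝[>] 0) (𝓝[>] 0) := by
  refine tendsto_nhdsWithin_iff.mpr ⟨?_, ?_⟩
  · simpa using (continuous_sqrt.tendsto 0).mono_left nhdsWithin_le_nhds
  · filter_upwards [self_mem_nhdsWithin] with τ hτ using Real.sqrt_pos.mpr hτ

lemma HasDerivAt.tendsto_nhdsGT {f : ℝ → ℝ} {f' a c : ℝ} (hf : HasDerivAt f f' a)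
    (hfa : f a = c) : Tendsto f (𝓝[>] a) (𝓝 c) :=
  hfa ▸ hf.continuousAt.tendsto.mono_left nhdsWithin_le_nhds

lemma HasDerivAt.tendsto_div_nhdsGT_zero {f : ℝ → ℝ} {f' : ℝ} (hf : HasDerivAt f f' 0)
    (hf0 : f 0 = 0) : Tendsto (fun s => f s / s) (𝓝[>] 0) (𝓝 f') := by
  simpa [hf0, div_eq_inv_mul] using hf.tendsto_slope_zero_right

lemma tendsto_zero_of_tendsto_div_nhdsGT_zero {g : ℝ → ℝ} {b : ℝ}
    (hg : Tendsto (fun s => g s / s) (𝓝[>] 0) (𝓝 b)) : Tendsto g (𝓝[>] 0) (𝓝 0) := by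
  have h := (tendsto_id.mono_left nhdsWithin_le_nhds).mul hg
  rw [zero_mul] at h
  refine h.congr' ?_
  filter_upwards [self_mem_nhdsWithin] with s (hs : 0 < s)
  exact mul_div_cancel₀ _ hs.ne'

lemma tendsto_div_of_tendsto_div_nhdsGT_zero {f g : ℝ → ℝ} {a b : ℝ}
    (hf : Tendsto (fun s => f s / s) (𝓝[>] 0) (𝓝 a))
    (hg : Tendsto (fun s => g s / s) (𝓝[>] 0) (𝓝 b)) (hb : b ≠ 0) :
    Tendsto (fun s => f s / g s) (𝓝[>] 0) (𝓝 (a / b)) := by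
  refine (hf.div hg hb).congr' ?_
  filter_upwards [self_mem_nhdsWithin] with s (hs : 0 < s)
  exact div_div_div_cancel_right₀ hs.ne' _ _

lemma tendsto_betaG_div {σ θ T : ℝ} {t u : ℝ → ℝ} (hT : 0 < T)
    (ht : Tendsto t (𝓝[>] 0) (𝓝 T)) (hu : Tendsto u (𝓝[>] 0) (𝓝 T))
    (hut : ∀ s, u s - t s = θ * s ^ 2) :
    Tendsto (fun s => betaG σ (t s) (u s) / s) (𝓝[>] 0) (𝓝 (σ * √θ)) := by
  have hlim : Tendsto (fun s => σ / (u s * √3) * √(θ * (u s ^ 2 + u s * t s + t s ^ 2)))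
      (𝓝[>] 0) (𝓝 (σ / (T * √3) * √(θ * (T ^ 2 + T * T + T ^ 2)))) :=
    (tendsto_const_nhds.div (hu.mul_const _) (by positivity)).mul
      ((tendsto_const_nhds.mul (((hu.pow 2).add (hu.mul ht)).add (ht.pow 2))).sqrt)
  have hval : σ / (T * √3) * √(θ * (T ^ 2 + T * T + T ^ 2)) = σ * √θ := by
    rw [show θ * (T ^ 2 + T * T + T ^ 2) = θ * (3 * T ^ 2) by ring,
      Real.sqrt_mul' θ (by positivity), Real.sqrt_mul' 3 (by positivity), Real.sqrt_sq hT.le]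
    field_simp
  rw [hval] at hlim
  refine hlim.congr' ?_
  filter_upwards [self_mem_nhdsWithin] with s (hs : 0 < s)
  have hcube : u s ^ 3 - t s ^ 3 = s ^ 2 * (θ * (u s ^ 2 + u s * t s + t s ^ 2)) := by
    rw [show u s ^ 3 - t s ^ 3 = (u s - t s) * (u s ^ 2 + u s * t s + t s ^ 2) by ring, hut]
    ring
  rw [betaG, hcube, Real.sqrt_mul (sq_nonneg s), Real.sqrt_sq hs.le]
  field_simp

lemma hasDerivAt_log_sub_alphaG {r q σ T G x' y' : ℝ} {t u x y : ℝ → ℝ}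
    (hT : T ≠ 0) (hG : G ≠ 0)
    (ht : HasDerivAt t 0 0) (hu : HasDerivAt u 0 0) (hx : HasDerivAt x x' 0)
    (hy : HasDerivAt y y' 0) (ht0 : t 0 = T) (hu0 : u 0 = T) (hx0 : x 0 = G) (hy0 : y 0 = G) :
    HasDerivAt (fun s => log (y s) - alphaG r q σ (t s) (u s) (x s)) ((y' - x') / G) 0 := by
  have hα := ((ht.div hu (hu0 ▸ hT)).mul (hx.log (hx0 ▸ hG))).sub
    ((((hu.pow 2).sub (ht.pow 2)).div (hu.const_mul 2) (by simp [hu0, hT])).mul_const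
      (r - q + σ ^ 2 / 2))
  refine ((hy.log (hy0 ▸ hG)).sub hα).congr_deriv ?_
  simp only [Pi.div_apply, Pi.sub_apply, Pi.pow_apply, ht0, hu0, hx0, hy0]
  field_simp
  ring

lemma hasDerivAt_eHatG_numerator {r q T G y' : ℝ} {u y : ℝ → ℝ} (hG : G ≠ 0)
    (hu : HasDerivAt u 0 0) (hy : HasDerivAt y y' 0) (hu0 : u 0 = T) (hy0 : y 0 = G) :
    HasDerivAt (fun s => -q * u s + y s * r * u s + y s * log (y s))
      (y' * (r * T + log G + 1)) 0 := by
  refine (((hu.const_mul (-q)).add ((hy.mul_const r).mul hu)).add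
    (hy.mul (hy.log (hy0 ▸ hG)))).congr_deriv ?_
  rw [hu0, hy0]
  field_simp
  ring

lemma tendsto_eHatG_of_tendsto {ι : Type*} {l : Filter ι} {r q σ T G z p : ℝ}
    {t u x y : ι → ℝ} (hT : T ≠ 0) (hG : 0 < G)
    (ht : Tendsto t l (𝓝 T)) (hu : Tendsto u l (𝓝 T)) (hx : Tendsto x l (𝓝 G))
    (hα : Tendsto (fun i => alphaG r q σ (t i) (u i) (x i)) l (𝓝 (log G)))
    (hβ : Tendsto (fun i => betaG σ (t i) (u i)) l (𝓝 0))
    (hz : Tendsto (fun i => (log (y i) - alphaG r q σ (t i) (u i) (x i)) / betaG σ (t i) (u i))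
      l (𝓝 z))
    (hp : Tendsto (fun i => (-q * u i + y i * r * u i + y i * log (y i)
      + y i * betaG σ (t i) (u i) ^ 2) / betaG σ (t i) (u i)) l (𝓝 p)) :
    Tendsto (fun i => eHatG r q σ (t i) (x i) (u i) (y i)) l
      (𝓝 ((p * stdNormalPDF z - G * (r * T + log G + 1) * stdNormalCDF z) / (T * G))) := by
  have hlim := ((((hu.sub ht).const_mul (-q)).rexp.mul
    ((tendsto_const_nhds (x := (1 : ℝ))).div hu hT)).mul
    ((hp.mul ((continuous_stdNormalPDF.tendsto _).comp hz)).sub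
      (((hα.add ((hβ.pow 2).div_const 2)).rexp.mul
        ((((hu.const_mul r).add hα).add (hβ.pow 2)).add_const 1)).mul
          ((continuous_stdNormalCDF.tendsto _).comp (hz.sub hβ))))).mul
    (ht.div (hu.mul hx) (mul_ne_zero hT hG.ne'))
  convert hlim using 2
  · simp [eHatG]
  · rw [zero_pow two_ne_zero, zero_div, add_zero, add_zero, sub_zero, sub_self, mul_zero,
      Real.exp_zero, Real.exp_log hG]
    field_simp

theorem tendsto_eHatG_of_hasDerivAt {r q σ T G b x' y' : ℝ} {t u x y : ℝ → ℝ}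
    (hT : 0 < T) (hG : 0 < G) (hGeq : log G = q * T / G - r * T) (hb : b ≠ 0)
    (ht : HasDerivAt t 0 0) (hu : HasDerivAt u 0 0) (hx : HasDerivAt x x' 0)
    (hy : HasDerivAt y y' 0) (ht0 : t 0 = T) (hu0 : u 0 = T) (hx0 : x 0 = G) (hy0 : y 0 = G)
    (hβ : Tendsto (fun s => betaG σ (t s) (u s) / s) (𝓝[>] 0) (𝓝 b)) :
    Tendsto (fun s => eHatG r q σ (t s) (x s) (u s) (y s)) (𝓝[>] 0)
      (𝓝 ((q * T + G) * (y' / G / b * stdNormalPDF ((y' - x') / G / b)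
        - stdNormalCDF ((y' - x') / G / b)) / (T * G))) := by
  have hA := hasDerivAt_log_sub_alphaG (r := r) (q := q) (σ := σ) hT.ne' hG.ne' ht hu hx hy
    ht0 hu0 hx0 hy0
  have hA0 : log (y 0) - alphaG r q σ (t 0) (u 0) (x 0) = 0 := by
    simp [alphaG, ht0, hu0, hx0, hy0, hT.ne']
  have hN := hasDerivAt_eHatG_numerator (q := q) (r := r) hG.ne' hu hy hu0 hy0
  have hN0 : -q * u 0 + y 0 * r * u 0 + y 0 * log (y 0) = 0 := by
    rw [hu0, hy0, hGeq]
    field_simp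
    ring
  have hy' := hy.tendsto_nhdsGT hy0
  have hβ0 := tendsto_zero_of_tendsto_div_nhdsGT_zero hβ
  have hP : Tendsto (fun s => (-q * u s + y s * r * u s + y s * log (y s)
      + y s * betaG σ (t s) (u s) ^ 2) / betaG σ (t s) (u s))
      (𝓝[>] 0) (𝓝 (y' * (r * T + log G + 1) / b + G * 0)) := by
    refine ((tendsto_div_of_tendsto_div_nhdsGT_zero (hN.tendsto_div_nhdsGT_zero hN0) hβ hb).add
      (hy'.mul hβ0)).congr fun s => ?_
    rw [add_div (-q * u s + y s * r * u s + y s * log (y s)), sq, mul_div_assoc (y s),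
      mul_self_div_self]
  convert tendsto_eHatG_of_tendsto hT.ne' hG (ht.tendsto_nhdsGT ht0) (hu.tendsto_nhdsGT hu0)
    (hx.tendsto_nhdsGT hx0) (by simpa using (hy'.log hG.ne').sub (hA.tendsto_nhdsGT hA0)) hβ0
    (tendsto_div_of_tendsto_div_nhdsGT_zero (hA.tendsto_div_nhdsGT_zero hA0) hβ hb) hP using 2
  rw [hGeq]
  field_simp
  ring

theorem tendsto_eHatG_general (r q σ T G h θ : ℝ) (hσ : 0 < σ) (hT : 0 < T) (hG0 : 0 < G)
    (hGeq : Real.log G = q * T / G - r * T) (hθ : θ ∈ Set.Ioo (0:ℝ) 1) :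
    Tendsto (fun τ : ℝ =>
        eHatG r q σ (T - τ) (G * (1 + h * σ * Real.sqrt τ)) (T - τ * (1 - θ))
          (G * (1 + h * σ * Real.sqrt τ * Real.sqrt (1 - θ))))
      (𝓝[>] 0)
      (𝓝 ((q / G + 1 / T) *
        (-stdNormalCDF (-h * (1 - Real.sqrt (1 - θ)) / Real.sqrt θ)
          + h * (Real.sqrt (1 - θ) / Real.sqrt θ)
              * stdNormalPDF (-h * (1 - Real.sqrt (1 - θ)) / Real.sqrt θ)))) := by
  have hθ0 : 0 < θ := hθ.1
  have ht : HasDerivAt (fun s : ℝ => T - s ^ 2) 0 0 := by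
    simpa using (hasDerivAt_pow 2 (0 : ℝ)).const_sub T
  have hu : HasDerivAt (fun s : ℝ => T - s ^ 2 * (1 - θ)) 0 0 := by
    simpa using ((hasDerivAt_pow 2 (0 : ℝ)).mul_const (1 - θ)).const_sub T
  have hx : HasDerivAt (fun s => G * (1 + h * σ * s)) (G * (h * σ)) 0 := by
    simpa using (((hasDerivAt_id (0 : ℝ)).const_mul (h * σ)).const_add 1).const_mul G
  have hy : HasDerivAt (fun s => G * (1 + h * σ * s * √(1 - θ))) (G * (h * σ * √(1 - θ))) 0 := by
    simpa using
      ((((hasDerivAt_id (0 : ℝ)).const_mul (h * σ)).mul_const √(1 - θ)).const_add 1).const_mul G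
  have hβ : Tendsto (fun s => betaG σ (T - s ^ 2) (T - s ^ 2 * (1 - θ)) / s) (𝓝[>] 0)
      (𝓝 (σ * √θ)) :=
    tendsto_betaG_div hT (ht.tendsto_nhdsGT (by simp)) (hu.tendsto_nhdsGT (by simp))
      fun s => by ring
  have hlim := (tendsto_eHatG_of_hasDerivAt (r := r) (q := q) hT hG0 hGeq (by positivity)
    ht hu hx hy (by simp) (by simp) (by simp) (by simp) hβ).comp tendsto_sqrt_nhdsGT_zero
  have hz : (G * (h * σ * √(1 - θ)) - G * (h * σ)) / G / (σ * √θ)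
      = -h * (1 - √(1 - θ)) / √θ := by
    field_simp
    ring
  have hw : G * (h * σ * √(1 - θ)) / G / (σ * √θ) = h * (√(1 - θ) / √θ) := by
    field_simp
  rw [hz, hw] at hlim
  convert hlim.congr' ?_ using 2
  · field_simp
    ring
  · filter_upwards [self_mem_nhdsWithin] with τ (hτ : 0 < τ)
    simp [Real.sq_sqrt hτ.le]

/-- With `G ∈ (0,1)` the unique root of `ln G = qT/G − rT`, `h ∈ ℝ`, `θ ∈ (0,1)`:
`lim_{τ→0⁺} E(T−τ, G(1+hσ√τ), T−τ(1−θ), G(1+hσ√τ√(1−θ)))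
  = (q/G + 1/T)·(−Φ(−h(1−√(1−θ))/√θ) + h(√(1−θ)/√θ)φ(−h(1−√(1−θ))/√θ))`. -/
theorem tendsto_eHatG (r q σ T G h θ : ℝ) (hσ : 0 < σ) (hT : 0 < T)
    (hq : 0 ≤ q) (hrq : q < r) (hG0 : 0 < G) (hG1 : G < 1)
    (hGeq : Real.log G = q * T / G - r * T) (hθ : θ ∈ Set.Ioo (0:ℝ) 1) :
    Tendsto (fun τ : ℝ =>
        eHatG r q σ (T - τ) (G * (1 + h * σ * Real.sqrt τ)) (T - τ * (1 - θ))
          (G * (1 + h * σ * Real.sqrt τ * Real.sqrt (1 - θ))))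
      (𝓝[>] 0)
      (𝓝 ((q / G + 1 / T) *
        (-stdNormalCDF (-h * (1 - Real.sqrt (1 - θ)) / Real.sqrt θ)
          + h * (Real.sqrt (1 - θ) / Real.sqrt θ)
              * stdNormalPDF (-h * (1 - Real.sqrt (1 - θ)) / Real.sqrt θ)))) :=
  tendsto_eHatG_general r q σ T G h θ hσ hT hG0 hGeq hθ
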